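/- arXiv:2009.08817 — 3 statements merged into one kernel-verified Lean document; each statement's English description precedes it below -/
import Mathlib

section
/- Let (X,d) and (M,d) be metric spaces, K ⊆ X nonempty, F : X×X×X×M → ℝ, and let S(μ) = {u ∈ K : F(u,z,u;μ) ≥ 0 for all z ∈ K} be the solution map. Fix μ̄ ∈ M and ū ∈ S(μ̄). Suppose there exist a neighborhood U of μ̄, a neighborhood V of ū and constants m > 0, β > 0, ξ > 0, θ ≥ 0, b > 0, c ≥ 0 with θ < β and c < m such that: (i) m·d(ū,v)^β ≤ F(ū,v,ū;μ̄)_− + F(ū,v,v;μ̄)_+ for all v ∈ S(μ) ∩ V and μ ∈ U; (ii) F(ū,v,v;μ̄) ≤ c·d(ū,v)^β + b·d(ū,v)^θ·d(μ,μ̄)^ξ for all μ ∈ U and v ∈ S(μ) ∩ V with v ≠ ū. Then for every μ ∈ U and every v ∈ S(μ) ∩ V one has d(v, ū) ≤ (b/(m−c))^{1/(β−θ)} · d(μ, μ̄)^{ξ/(β−θ)}. In particular, S is isolated Hölder calm at (μ̄, ū) and ū is the unique solution of S(μ̄) in V. -/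
/-!
At a solution `v ≠ u₀` of a perturbed problem, `u₀ ∈ S(μ₀)` gives `F(u₀,v,u₀;μ₀) ≥ 0`, so the
negative part in (i) vanishes, and since `m · d(u₀,v)^β > 0` the positive part is `F(u₀,v,v;μ₀)`
itself. Chaining (i) and (ii) yields `(m − c) · d^β ≤ b · d^θ · d(μ,μ₀)^ξ`; dividing by `d^θ`
and taking the `(β − θ)`-th root gives the Hölder estimate, which at `μ = μ₀` forces `v = u₀`.
-/

theorem Real.le_mul_rpow_of_mul_rpow_le {d D k b β θ ξ : ℝ} (hd : 0 < d) (hD : 0 ≤ D)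
    (hk : 0 < k) (hθβ : θ < β) (h : k * d ^ β ≤ b * d ^ θ * D ^ ξ) :
    d ≤ (b / k) ^ (1 / (β - θ)) * D ^ (ξ / (β - θ)) := by
  have hγ : 0 < β - θ := sub_pos.2 hθβ
  have hDξ : 0 ≤ D ^ ξ := Real.rpow_nonneg hD ξ
  have hpow : d ^ (β - θ) ≤ b / k * D ^ ξ := by
    rw [Real.rpow_sub hd, div_le_iff₀ (Real.rpow_pos_of_pos hd θ), div_mul_eq_mul_div, div_mul_eq_mul_div, le_div_iff₀ hk]
    linarith
  have hbk : 0 < b / k :=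
    pos_of_mul_pos_left ((Real.rpow_pos_of_pos hd _).trans_le hpow) hDξ
  calc d ≤ (b / k * D ^ ξ) ^ (β - θ)⁻¹ :=
        (Real.le_rpow_inv_iff_of_pos hd.le (by positivity) hγ).2 hpow
    _ = (b / k) ^ (1 / (β - θ)) * D ^ (ξ / (β - θ)) := by
        rw [Real.mul_rpow hbk.le hDξ, ← Real.rpow_mul hD, one_div, div_eq_mul_inv ξ]

theorem calmness_case_a_zero_general {X M : Type*} [MetricSpace X] [MetricSpace M]
    (K : Set X) (F : X → X → X → M → ℝ)
    (S : M → Set X) (hS : ∀ μ, S μ = {u ∈ K | ∀ z ∈ K, 0 ≤ F u z u μ})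
    (μ₀ : M) (u₀ : X) (hu₀ : u₀ ∈ S μ₀)
    (U : Set M) (hU : U ∈ nhds μ₀) (V : Set X)
    (m β ξ b : ℝ) (θ c : ℝ)
    (hm : 0 < m) (hξ : 0 < ξ) (hb : 0 < b)
    (hθβ : θ < β) (hcm : c < m)
    (hi : ∀ μ ∈ U, ∀ v ∈ S μ ∩ V,
      m * dist u₀ v ^ β ≤ max (-(F u₀ v u₀ μ₀)) 0 + max (F u₀ v v μ₀) 0)
    (hii : ∀ μ ∈ U, ∀ v ∈ S μ ∩ V, v ≠ u₀ →
      F u₀ v v μ₀ ≤ c * dist u₀ v ^ β + b * dist u₀ v ^ θ * dist μ μ₀ ^ ξ) :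
    (∀ μ ∈ U, ∀ v ∈ S μ ∩ V,
      dist v u₀ ≤ (b / (m - c)) ^ (1 / (β - θ)) * dist μ μ₀ ^ (ξ / (β - θ))) ∧
    (∀ v ∈ S μ₀ ∩ V, v = u₀) := by
  have hcalm : ∀ μ ∈ U, ∀ v ∈ S μ ∩ V,
      dist v u₀ ≤ (b / (m - c)) ^ (1 / (β - θ)) * dist μ μ₀ ^ (ξ / (β - θ)) := by
    intro μ hμ v hv
    rcases eq_or_ne v u₀ with rfl | hvu
    · rw [dist_self]
      have : 0 ≤ b / (m - c) := div_nonneg hb.le (sub_pos.2 hcm).le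
      positivity
    have hvK : v ∈ K := by rw [hS] at hv; exact hv.1.1
    have hF₀ : 0 ≤ F u₀ v u₀ μ₀ := by rw [hS] at hu₀; exact hu₀.2 v hvK
    have hd : 0 < dist u₀ v := dist_pos.2 hvu.symm
    have hpos : m * dist u₀ v ^ β ≤ F u₀ v v μ₀ := by
      have h := hi μ hμ v hv
      rw [max_eq_right (neg_nonpos.2 hF₀), zero_add, le_max_iff] at h
      exact h.resolve_right (mul_pos hm (Real.rpow_pos_of_pos hd β)).not_ge
    rw [dist_comm]
    refine Real.le_mul_rpow_of_mul_rpow_le hd dist_nonneg (sub_pos.2 hcm) hθβ ?_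
    linarith [hii μ hμ v hv hvu]
  refine ⟨hcalm, fun v hv => dist_le_zero.1 ?_⟩
  simpa [Real.zero_rpow (div_pos hξ (sub_pos.2 hθβ)).ne'] using hcalm μ₀ (mem_of_mem_nhds hU) v hv

/-- Main calmness theorem, case `a = 0`: under the strong-monotonicity-type estimate (i)
and the apriori estimate (ii) with `θ < β` and `c < m`, every local solution `v ∈ S(μ)`
satisfies `d(v,u₀) ≤ (b/(m−c))^(1/(β−θ)) · d(μ,μ₀)^(ξ/(β−θ))`; in particular `S` is
isolated Hölder calm at `(μ₀, u₀)` and `u₀` is the unique solution in `V`. -/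
theorem calmness_case_a_zero {X M : Type*} [MetricSpace X] [MetricSpace M]
    (K : Set X) (hK : K.Nonempty) (F : X → X → X → M → ℝ)
    (S : M → Set X) (hS : ∀ μ, S μ = {u ∈ K | ∀ z ∈ K, 0 ≤ F u z u μ})
    (μ₀ : M) (u₀ : X) (hu₀ : u₀ ∈ S μ₀)
    (U : Set M) (hU : U ∈ nhds μ₀) (V : Set X) (hV : V ∈ nhds u₀)
    (m β ξ b : ℝ) (θ c : ℝ)
    (hm : 0 < m) (hβ : 0 < β) (hξ : 0 < ξ) (hb : 0 < b)
    (hθ : 0 ≤ θ) (hc : 0 ≤ c) (hθβ : θ < β) (hcm : c < m)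
    (hi : ∀ μ ∈ U, ∀ v ∈ S μ ∩ V,
      m * dist u₀ v ^ β ≤ max (-(F u₀ v u₀ μ₀)) 0 + max (F u₀ v v μ₀) 0)
    (hii : ∀ μ ∈ U, ∀ v ∈ S μ ∩ V, v ≠ u₀ →
      F u₀ v v μ₀ ≤ c * dist u₀ v ^ β + b * dist u₀ v ^ θ * dist μ μ₀ ^ ξ) :
    (∀ μ ∈ U, ∀ v ∈ S μ ∩ V,
      dist v u₀ ≤ (b / (m - c)) ^ (1 / (β - θ)) * dist μ μ₀ ^ (ξ / (β - θ))) ∧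
    (∀ v ∈ S μ₀ ∩ V, v = u₀) :=
  calmness_case_a_zero_general K F S hS μ₀ u₀ hu₀ U hU V m β ξ b θ c hm hξ hb hθβ hcm hi hii
end

section
/- Let (X,d), (M,d) be metric spaces, K ⊆ X, and S(μ) = {u ∈ K : F(u,z,u;μ) ≥ 0 ∀z ∈ K}. Fix μ̄ ∈ M, ū ∈ S(μ̄). Suppose there exist neighborhoods U of μ̄ and Ṽ of ū and constants m, β, ξ > 0, a > 0, b > 0, c ≥ 0, θ ≥ 0, α > 0 with θ < β, c < m and β < α + θ such that (i) m·d(ū,v)^β ≤ F(ū,v,ū;μ̄)_− + F(ū,v,v;μ̄)_+ for all v ∈ S(μ) ∩ Ṽ, μ ∈ U, and (ii) F(ū,v,v;μ̄) ≤ c·d(ū,v)^β + d(ū,v)^θ·(a·d(ū,v)^α + b·d(μ,μ̄)^ξ) for all μ ∈ U and v ∈ S(μ) ∩ Ṽ with v ≠ ū. Then for any r with 0 < r < ((m−c)/a)^{1/(α+θ−β)}, setting V = B(ū,r) ∩ Ṽ, δ = ξ/(β−θ) and k = r·(r^{β−θ} − (a/(m−c))·r^α)^{1/(θ−β)}·(b/(m−c))^{1/(β−θ)},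 one has d(v, ū) ≤ k·d(μ, μ̄)^δ for all μ ∈ U and v ∈ S(μ) ∩ V. -/
open Filter Metric

/-!
Since `u₀ ∈ S(μ₀)`, the term `F(u₀,v,u₀;μ₀)_−` in (i) vanishes, so (i) and (ii) give, for
`t = d(u₀,v) > 0` and `D = d(μ,μ₀)`, the growth inequality `(m−c)·t^(β−θ) ≤ a·t^α + b·D^ξ`.
On the ball of radius `r` one has `t^α ≤ r^(α+θ−β)·t^(β−θ)`, and the choice of `r` makes
`(m−c) − a·r^(α+θ−β)` positive, so `t^(β−θ) ≤ b·D^ξ / ((m−c) − a·r^(α+θ−β))`; the right-hand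
side is exactly `(k·D^δ)^(β−θ)`.
-/

namespace Calmness

noncomputable def modulus (m c a b α β θ r : ℝ) : ℝ :=
  r * (r ^ (β - θ) - (a / (m - c)) * r ^ α) ^ (1 / (θ - β)) * (b / (m - c)) ^ (1 / (β - θ))

lemma le_of_le_max_neg_add_max {x y p : ℝ} (hx : 0 ≤ x) (hp : 0 < p)
    (h : p ≤ max (-x) 0 + max y 0) : p ≤ y := by
  rw [max_eq_right (neg_nonpos.2 hx), zero_add] at h
  exact (le_max_iff.1 h).resolve_right hp.not_ge

lemma sub_mul_rpow_sub_le {m c t β θ R : ℝ} (ht : 0 < t)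
    (h : m * t ^ β ≤ c * t ^ β + t ^ θ * R) : (m - c) * t ^ (β - θ) ≤ R := by
  have hsplit : t ^ β = t ^ θ * t ^ (β - θ) := by
    rw [← Real.rpow_add ht, add_sub_cancel]
  refine le_of_mul_le_mul_left ?_ (Real.rpow_pos_of_pos ht θ)
  rw [hsplit] at h
  linarith

lemma mul_rpow_lt_of_lt_rpow_one_div {a n r γ : ℝ} (ha : 0 < a) (hn : 0 ≤ n) (hr : 0 ≤ r)
    (hγ : 0 < γ) (h : r < (n / a) ^ (1 / γ)) : a * r ^ γ < n := by
  rw [one_div, Real.lt_rpow_inv_iff_of_pos hr (div_nonneg hn ha.le) hγ] at h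
  rwa [lt_div_iff₀' ha] at h

lemma rpow_le_rpow_sub_mul_rpow {t r s α : ℝ} (ht : 0 < t) (htr : t ≤ r) (hsα : s ≤ α) :
    t ^ α ≤ r ^ (α - s) * t ^ s := by
  calc t ^ α = t ^ (α - s) * t ^ s := by rw [← Real.rpow_add ht, sub_add_cancel]
    _ ≤ r ^ (α - s) * t ^ s := by gcongr

lemma rpow_le_div_of_mul_rpow_le {t r n a s α B : ℝ} (ht : 0 < t) (htr : t ≤ r) (hsα : s ≤ α)
    (ha : 0 ≤ a) (hgap : a * r ^ (α - s) < n) (h : n * t ^ s ≤ a * t ^ α + B) :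
    t ^ s ≤ B / (n - a * r ^ (α - s)) := by
  rw [le_div_iff₀ (sub_pos.2 hgap)]
  have := mul_le_mul_of_nonneg_left (rpow_le_rpow_sub_mul_rpow ht htr hsα) ha
  linarith

section modulus

variable {m c a b α β θ r : ℝ}

lemma modulus_base_pos (hr : 0 < r) (hcm : c < m) (hgap : a * r ^ (α + θ - β) < m - c) :
    0 < r ^ (β - θ) - (a / (m - c)) * r ^ α := by
  have hrα : r ^ α = r ^ (α + θ - β) * r ^ (β - θ) := by
    rw [← Real.rpow_add hr]; ring_nf
  rw [sub_pos, hrα, div_mul_eq_mul_div, div_lt_iff₀ (sub_pos.2 hcm), ← mul_assoc]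
  exact mul_lt_mul_of_pos_left hgap (Real.rpow_pos_of_pos hr _) |>.trans_eq' (by ring)

lemma modulus_nonneg (hr : 0 < r) (hb : 0 ≤ b) (hcm : c < m)
    (hgap : a * r ^ (α + θ - β) < m - c) : 0 ≤ modulus m c a b α β θ r := by
  have := modulus_base_pos hr hcm hgap
  have : 0 ≤ b / (m - c) := div_nonneg hb (sub_pos.2 hcm).le
  unfold modulus
  positivity

lemma modulus_mul_rpow_rpow {ξ D : ℝ} (hr : 0 < r) (hb : 0 ≤ b) (hD : 0 ≤ D) (hθβ : θ < β)
    (hcm : c < m) (hgap : a * r ^ (α + θ - β) < m - c) :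
    (modulus m c a b α β θ r * D ^ (ξ / (β - θ))) ^ (β - θ) =
      b * D ^ ξ / (m - c - a * r ^ (α + θ - β)) := by
  have hG := modulus_base_pos hr hcm hgap
  have hn : 0 < m - c := sub_pos.2 hcm
  have hs : β - θ ≠ 0 := sub_ne_zero.2 hθβ.ne'
  have hrα : r ^ α = r ^ (α + θ - β) * r ^ (β - θ) := by
    rw [← Real.rpow_add hr]; ring_nf
  have hbn : 0 ≤ b / (m - c) := div_nonneg hb hn.le
  have hexp : 1 / (θ - β) * (β - θ) = -1 := by rw [← neg_sub β θ]; field_simp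
  unfold modulus
  rw [Real.mul_rpow (by positivity) (by positivity), Real.mul_rpow (by positivity) (by positivity),
    Real.mul_rpow hr.le (by positivity), ← Real.rpow_mul hG.le, ← Real.rpow_mul hbn,
    ← Real.rpow_mul hD, one_div_mul_cancel hs, div_mul_cancel₀ _ hs,
    hexp, Real.rpow_neg_one, Real.rpow_one]
  rw [hrα] at hG ⊢
  field_simp

lemma le_modulus_mul_rpow {t ξ D : ℝ} (hr : 0 < r) (ht : 0 < t) (htr : t ≤ r) (hD : 0 ≤ D)
    (ha : 0 ≤ a) (hb : 0 ≤ b) (hθβ : θ < β) (hcm : c < m) (hβαθ : β ≤ α + θ)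
    (hgap : a * r ^ (α + θ - β) < m - c) (h : (m - c) * t ^ (β - θ) ≤ a * t ^ α + b * D ^ ξ) :
    t ≤ modulus m c a b α β θ r * D ^ (ξ / (β - θ)) := by
  have hk := mul_nonneg (modulus_nonneg hr hb hcm hgap) (Real.rpow_nonneg hD (ξ / (β - θ)))
  rw [← Real.rpow_le_rpow_iff ht.le hk (sub_pos.2 hθβ),
    modulus_mul_rpow_rpow hr hb hD hθβ hcm hgap]
  rw [show α + θ - β = α - (β - θ) by ring] at hgap ⊢
  exact rpow_le_div_of_mul_rpow_le ht htr (by linarith) ha hgap h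

end modulus

end Calmness

open Calmness in
theorem calmness_case_one_general {X M : Type*} [MetricSpace X] [MetricSpace M]
    (K : Set X) (F : X → X → X → M → ℝ)
    (S : M → Set X) (hS : ∀ μ, S μ = {u ∈ K | ∀ z ∈ K, 0 ≤ F u z u μ})
    (μ₀ : M) (u₀ : X) (hu₀ : u₀ ∈ S μ₀)
    (U : Set M) (Vt : Set X)
    (m β ξ a b α : ℝ) (θ c : ℝ)
    (hm : 0 < m) (ha : 0 < a) (hb : 0 < b)
    (hθβ : θ < β) (hcm : c < m) (hβαθ : β < α + θ)
    (hi : ∀ μ ∈ U, ∀ v ∈ S μ ∩ Vt,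
      m * dist u₀ v ^ β ≤ max (-(F u₀ v u₀ μ₀)) 0 + max (F u₀ v v μ₀) 0)
    (hii : ∀ μ ∈ U, ∀ v ∈ S μ ∩ Vt, v ≠ u₀ →
      F u₀ v v μ₀ ≤ c * dist u₀ v ^ β +
        dist u₀ v ^ θ * (a * dist u₀ v ^ α + b * dist μ μ₀ ^ ξ)) :
    ∀ r : ℝ, 0 < r → r < ((m - c) / a) ^ (1 / (α + θ - β)) →
      ∀ μ ∈ U, ∀ v ∈ S μ ∩ (ball u₀ r ∩ Vt),
        dist v u₀ ≤
          (r * (r ^ (β - θ) - (a / (m - c)) * r ^ α) ^ (1 / (θ - β)) *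
            (b / (m - c)) ^ (1 / (β - θ))) *
          dist μ μ₀ ^ (ξ / (β - θ)) := by
  intro r hr hrlt μ hμ v ⟨hvS, hvr, hvVt⟩
  have hgap : a * r ^ (α + θ - β) < m - c :=
    mul_rpow_lt_of_lt_rpow_one_div ha (sub_pos.2 hcm).le hr.le (by linarith) hrlt
  rw [dist_comm]
  by_cases hvu : v = u₀
  · rw [hvu, dist_self]
    exact mul_nonneg (modulus_nonneg hr hb.le hcm hgap) (Real.rpow_nonneg dist_nonneg _)
  have ht : 0 < dist u₀ v := dist_pos.2 (Ne.symm hvu)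
  have hvK : v ∈ K := (hS μ ▸ hvS).1
  have hF₀ : 0 ≤ F u₀ v u₀ μ₀ := (hS μ₀ ▸ hu₀).2 v hvK
  have hgrowth : m * dist u₀ v ^ β ≤ F u₀ v v μ₀ :=
    le_of_le_max_neg_add_max hF₀ (by positivity) (hi μ hμ v ⟨hvS, hvVt⟩)
  exact le_modulus_mul_rpow hr ht (dist_comm v u₀ ▸ (mem_ball.1 hvr).le) dist_nonneg ha.le hb.le
    hθβ hcm hβαθ.le hgap (sub_mul_rpow_sub_le ht (hgrowth.trans (hii μ hμ v ⟨hvS, hvVt⟩ hvu)))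

/-- Main calmness theorem, case 1): `β < α + θ`, `a > 0`.  For any
`0 < r < ((m−c)/a)^(1/(α+θ−β))`, every solution `v ∈ S(μ) ∩ B(u₀,r) ∩ Vt` satisfies
`d(v,u₀) ≤ k · d(μ,μ₀)^δ` with `δ = ξ/(β−θ)` and
`k = r·(r^(β−θ) − (a/(m−c))·r^α)^(1/(θ−β))·(b/(m−c))^(1/(β−θ))`. -/
theorem calmness_case_one {X M : Type*} [MetricSpace X] [MetricSpace M]
    (K : Set X) (F : X → X → X → M → ℝ)
    (S : M → Set X) (hS : ∀ μ, S μ = {u ∈ K | ∀ z ∈ K, 0 ≤ F u z u μ})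
    (μ₀ : M) (u₀ : X) (hu₀ : u₀ ∈ S μ₀)
    (U : Set M) (hU : U ∈ nhds μ₀) (Vt : Set X) (hVt : Vt ∈ nhds u₀)
    (m β ξ a b α : ℝ) (θ c : ℝ)
    (hm : 0 < m) (hβ : 0 < β) (hξ : 0 < ξ) (ha : 0 < a) (hb : 0 < b) (hα : 0 < α)
    (hθ : 0 ≤ θ) (hc : 0 ≤ c) (hθβ : θ < β) (hcm : c < m) (hβαθ : β < α + θ)
    (hi : ∀ μ ∈ U, ∀ v ∈ S μ ∩ Vt,
      m * dist u₀ v ^ β ≤ max (-(F u₀ v u₀ μ₀)) 0 + max (F u₀ v v μ₀) 0)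
    (hii : ∀ μ ∈ U, ∀ v ∈ S μ ∩ Vt, v ≠ u₀ →
      F u₀ v v μ₀ ≤ c * dist u₀ v ^ β +
        dist u₀ v ^ θ * (a * dist u₀ v ^ α + b * dist μ μ₀ ^ ξ)) :
    ∀ r : ℝ, 0 < r → r < ((m - c) / a) ^ (1 / (α + θ - β)) →
      ∀ μ ∈ U, ∀ v ∈ S μ ∩ (ball u₀ r ∩ Vt),
        dist v u₀ ≤
          (r * (r ^ (β - θ) - (a / (m - c)) * r ^ α) ^ (1 / (θ - β)) *
            (b / (m - c)) ^ (1 / (β - θ))) *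
          dist μ μ₀ ^ (ξ / (β - θ)) :=
  calmness_case_one_general K F S hS μ₀ u₀ hu₀ U Vt m β ξ a b α θ c hm ha hb hθβ hcm hβαθ hi hii
end

section
/- Let (X,d), (M,d) be metric spaces, K ⊆ X, and S(μ) = {u ∈ K : F(u,z,u;μ) ≥ 0 ∀z ∈ K}. Fix μ̄ ∈ M, ū ∈ S(μ̄). Suppose there exist neighborhoods U of μ̄ and V of ū and constants m, β, ξ, α > 0, a > 0, b > 0, c ≥ 0, θ ≥ 0 with θ < β, β = α + θ and a + c < m such that conditions (i) and (ii) of the main theorem hold (with these constants). Then for all μ ∈ U and v ∈ S(μ) ∩ V, d(v, ū) ≤ (b/(m−c−a))^{1/(β−θ)} · d(μ, μ̄)^{ξ/(β−θ)}. -/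
/-!
Since `ū ∈ S(μ̄)` and `v ∈ K`, the term `F(ū,v,ū;μ̄)_−` in (i) vanishes, and since
`m·d(ū,v)^β > 0` for `v ≠ ū`, the positive part `F(ū,v,v;μ̄)_+` is `F(ū,v,v;μ̄)` itself.
Combining (i) with (ii) and `β = α + θ` gives
`(m − c − a)·d(ū,v)^α·d(ū,v)^θ ≤ b·d(μ,μ̄)^ξ·d(ū,v)^θ`; cancelling `d(ū,v)^θ` and taking
`α`-th roots yields the estimate, as `β − θ = α`.
-/

namespace Real

lemma rpow_le_div_mul_of_mul_rpow_le {t m c a b s α θ β : ℝ} (ht : 0 < t) (hacm : a + c < m)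
    (hβ : β = α + θ) (h : m * t ^ β ≤ c * t ^ β + t ^ θ * (a * t ^ α + b * s)) :
    t ^ α ≤ b / (m - c - a) * s := by
  have hsplit : t ^ β = t ^ α * t ^ θ := by rw [hβ, rpow_add ht]
  have hcancel : (m - c - a) * t ^ α * t ^ θ ≤ b * s * t ^ θ := by
    rw [hsplit] at h
    linarith
  rw [div_mul_eq_mul_div, le_div_iff₀ (by linarith)]
  linarith [le_of_mul_le_mul_right hcancel (rpow_pos_of_pos ht θ)]

lemma le_rpow_mul_rpow_of_rpow_le_mul_rpow {t K r γ ξ : ℝ} (ht : 0 ≤ t) (hK : 0 ≤ K)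
    (hr : 0 ≤ r) (hγ : 0 < γ) (h : t ^ γ ≤ K * r ^ ξ) :
    t ≤ K ^ (1 / γ) * r ^ (ξ / γ) := by
  rw [div_eq_mul_one_div ξ, rpow_mul hr, ← mul_rpow hK (by positivity), one_div,
    le_rpow_inv_iff_of_pos ht (by positivity) hγ]
  exact h

end Real

theorem calmness_case_two_general {X M : Type*} [MetricSpace X] [MetricSpace M]
    (K : Set X) (F : X → X → X → M → ℝ)
    (S : M → Set X) (hS : ∀ μ, S μ = {u ∈ K | ∀ z ∈ K, 0 ≤ F u z u μ})
    (μ₀ : M) (u₀ : X) (hu₀ : u₀ ∈ S μ₀)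
    (U : Set M) (V : Set X)
    (m β ξ α a b : ℝ) (θ c : ℝ)
    (hm : 0 < m) (hα : 0 < α) (hb : 0 < b)
    (hβeq : β = α + θ) (hacm : a + c < m)
    (hi : ∀ μ ∈ U, ∀ v ∈ S μ ∩ V,
      m * dist u₀ v ^ β ≤ max (-(F u₀ v u₀ μ₀)) 0 + max (F u₀ v v μ₀) 0)
    (hii : ∀ μ ∈ U, ∀ v ∈ S μ ∩ V, v ≠ u₀ →
      F u₀ v v μ₀ ≤ c * dist u₀ v ^ β +
        dist u₀ v ^ θ * (a * dist u₀ v ^ α + b * dist μ μ₀ ^ ξ)) :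
    ∀ μ ∈ U, ∀ v ∈ S μ ∩ V,
      dist v u₀ ≤ (b / (m - c - a)) ^ (1 / (β - θ)) * dist μ μ₀ ^ (ξ / (β - θ)) := by
  intro μ hμ v hv
  have hK : 0 ≤ b / (m - c - a) := div_nonneg hb.le (by linarith)
  rw [show β - θ = α by linarith, dist_comm]
  rcases eq_or_ne v u₀ with rfl | hvu
  · rw [dist_self]
    positivity
  have ht : 0 < dist u₀ v := dist_pos.mpr hvu.symm
  have hF : 0 ≤ F u₀ v u₀ μ₀ := by
    rw [hS] at hu₀ hv
    exact hu₀.2 v hv.1.1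
  have hgrowth : m * dist u₀ v ^ β ≤ F u₀ v v μ₀ := by
    have h := hi μ hμ v hv
    rw [max_eq_right (neg_nonpos.mpr hF), zero_add] at h
    exact (le_max_iff.mp h).resolve_right (mul_pos hm (Real.rpow_pos_of_pos ht β)).not_ge
  exact Real.le_rpow_mul_rpow_of_rpow_le_mul_rpow ht.le hK dist_nonneg hα
    (Real.rpow_le_div_mul_of_mul_rpow_le ht hacm hβeq (hgrowth.trans (hii μ hμ v hv hvu)))

/-- Main calmness theorem, case 2): `β = α + θ`, `a + c < m`.  Every solution
`v ∈ S(μ) ∩ V` satisfies `d(v,u₀) ≤ (b/(m−c−a))^(1/(β−θ)) · d(μ,μ₀)^(ξ/(β−θ))`. -/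
theorem calmness_case_two {X M : Type*} [MetricSpace X] [MetricSpace M]
    (K : Set X) (F : X → X → X → M → ℝ)
    (S : M → Set X) (hS : ∀ μ, S μ = {u ∈ K | ∀ z ∈ K, 0 ≤ F u z u μ})
    (μ₀ : M) (u₀ : X) (hu₀ : u₀ ∈ S μ₀)
    (U : Set M) (hU : U ∈ nhds μ₀) (V : Set X) (hV : V ∈ nhds u₀)
    (m β ξ α a b : ℝ) (θ c : ℝ)
    (hm : 0 < m) (hβ : 0 < β) (hξ : 0 < ξ) (hα : 0 < α) (ha : 0 < a) (hb : 0 < b)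
    (hθ : 0 ≤ θ) (hc : 0 ≤ c) (hθβ : θ < β) (hβeq : β = α + θ) (hacm : a + c < m)
    (hi : ∀ μ ∈ U, ∀ v ∈ S μ ∩ V,
      m * dist u₀ v ^ β ≤ max (-(F u₀ v u₀ μ₀)) 0 + max (F u₀ v v μ₀) 0)
    (hii : ∀ μ ∈ U, ∀ v ∈ S μ ∩ V, v ≠ u₀ →
      F u₀ v v μ₀ ≤ c * dist u₀ v ^ β +
        dist u₀ v ^ θ * (a * dist u₀ v ^ α + b * dist μ μ₀ ^ ξ)) :
    ∀ μ ∈ U, ∀ v ∈ S μ ∩ V,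
      dist v u₀ ≤ (b / (m - c - a)) ^ (1 / (β - θ)) * dist μ μ₀ ^ (ξ / (β - θ)) :=
  calmness_case_two_general K F S hS μ₀ u₀ hu₀ U V m β ξ α a b θ c hm hα hb hβeq hacm hi hii
end
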